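/- Zero is a simple eigenvalue of the Kirchhoff matrix L of a weighted digraph Γ if and only if Γ has a spanning diverging tree (equivalently, Γ has exactly one basis bicomponent). -/

import Mathlib

/-!
All three conditions are equivalent to the existence of a root, a vertex from which every vertex
is reachable. With a root, the maximum principle shows that `ker L` consists of the constant
vectors and that `ker L² = ker L`, so zero is a simple eigenvalue; without one there are two basis
bicomponents, and each carries its own left null vector of `L`.
-/

open Finset

variable {n : ℕ}

/-- Kirchhoff (Laplacian) matrix of the weighted digraph whose arc `(j, i)`
has weight `a i j` (so `a i j` is the weight with which agent `i` accounts for `j`). -/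
noncomputable def kirchhoff (a : Matrix (Fin n) (Fin n) ℝ) : Matrix (Fin n) (Fin n) ℝ :=
  Matrix.of fun i j => if i = j then ∑ k ∈ Finset.univ.erase i, a i k else -a i j

/-- `F` is a spanning diverging forest (out-forest) of the digraph with arcs
`u → v` present iff `a v u > 0`: every arc of `F` is an arc of the digraph,
every vertex has in-degree at most one in `F`, and `F` has no directed cycles
(equivalently, no infinite directed walk). -/
def IsOutForest (a : Matrix (Fin n) (Fin n) ℝ) (F : Finset (Fin n × Fin n)) : Prop :=
  (∀ e ∈ F, 0 < a e.2 e.1) ∧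
  (∀ u u' v : Fin n, (u, v) ∈ F → (u', v) ∈ F → u = u') ∧
  ¬ ∃ f : ℕ → Fin n, ∀ k, (f k, f (k + 1)) ∈ F

/-- Number of arcs of a maximum out-forest. -/
noncomputable def maxForestSize (a : Matrix (Fin n) (Fin n) ℝ) : ℕ :=
  sSup {k | ∃ F, IsOutForest a F ∧ F.card = k}

/-- The out-forest dimension: the number of trees in any maximum out-forest. -/
noncomputable def outForestDim (a : Matrix (Fin n) (Fin n) ℝ) : ℕ :=
  n - maxForestSize a

open Classical in
/-- The set of maximum out-forests. -/
noncomputable def maxForests (a : Matrix (Fin n) (Fin n) ℝ) :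
    Finset (Finset (Fin n × Fin n)) :=
  Finset.univ.filter fun F => IsOutForest a F ∧ F.card = maxForestSize a

/-- The weight of a forest: the product of its arc weights. -/
def forestWeight (a : Matrix (Fin n) (Fin n) ℝ) (F : Finset (Fin n × Fin n)) : ℝ :=
  ∏ e ∈ F, a e.2 e.1

/-- In forest `F`, vertex `i` belongs to the tree diverging from (rooted at) `j`. -/
def InTreeRootedAt (F : Finset (Fin n × Fin n)) (j i : Fin n) : Prop :=
  (∀ u, (u, j) ∉ F) ∧ Relation.ReflTransGen (fun x y => (x, y) ∈ F) j i

open Classical in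
/-- The normalized matrix of maximum out-forests. -/
noncomputable def barJ (a : Matrix (Fin n) (Fin n) ℝ) : Matrix (Fin n) (Fin n) ℝ :=
  Matrix.of fun i j =>
    (∑ F ∈ (maxForests a).filter (fun F => InTreeRootedAt F j i), forestWeight a F) /
    (∑ F ∈ maxForests a, forestWeight a F)

/-- Reachability by directed paths (arc `u → v` present iff `a v u > 0`). -/
def Reach (a : Matrix (Fin n) (Fin n) ℝ) (u v : Fin n) : Prop :=
  Relation.ReflTransGen (fun x y => 0 < a y x) u v

/-- The strong component (bicomponent) of vertex `v`. -/
def strongClass (a : Matrix (Fin n) (Fin n) ℝ) (v : Fin n) : Set (Fin n) :=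
  {u | Reach a u v ∧ Reach a v u}

/-- The set of strong components. -/
def strongClasses (a : Matrix (Fin n) (Fin n) ℝ) : Set (Set (Fin n)) :=
  {S | ∃ v, S = strongClass a v}

/-- Basis bicomponents: strong components with no arcs entering from outside. -/
def basisClasses (a : Matrix (Fin n) (Fin n) ℝ) : Set (Set (Fin n)) :=
  {S | (∃ v, S = strongClass a v) ∧ ∀ u v, u ∉ S → v ∈ S → ¬ 0 < a v u}

/-- Weak reachability (underlying undirected graph). -/
def WeakReach (a : Matrix (Fin n) (Fin n) ℝ) (u v : Fin n) : Prop :=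
  Relation.ReflTransGen (fun x y => 0 < a y x ∨ 0 < a x y) u v

/-- The set of weak components. -/
def weakClasses (a : Matrix (Fin n) (Fin n) ℝ) : Set (Set (Fin n)) :=
  {S | ∃ v, S = {u | WeakReach a u v}}

section Reachability

variable {a : Matrix (Fin n) (Fin n) ℝ}

lemma Reach.refl (u : Fin n) : Reach a u u := Relation.ReflTransGen.refl

lemma Reach.trans {u v w : Fin n} (huv : Reach a u v) (hvw : Reach a v w) : Reach a u w :=
  Relation.ReflTransGen.trans huv hvw

lemma Reach.of_pos {u v : Fin n} (h : 0 < a v u) : Reach a u v :=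
  Relation.ReflTransGen.single h

lemma mem_strongClass_self (u : Fin n) : u ∈ strongClass a u := ⟨Reach.refl u, Reach.refl u⟩

lemma strongClass_eq_of_mem {u v : Fin n} (h : u ∈ strongClass a v) :
    strongClass a u = strongClass a v := by
  obtain ⟨huv, hvu⟩ := h
  ext z
  exact ⟨fun ⟨hzu, huz⟩ => ⟨hzu.trans huv, hvu.trans huz⟩,
    fun ⟨hzv, hvz⟩ => ⟨hzv.trans hvu, huv.trans hvz⟩⟩

lemma disjoint_strongClass_of_ne {u v : Fin n} (h : strongClass a u ≠ strongClass a v) :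
    Disjoint (strongClass a u) (strongClass a v) :=
  Set.disjoint_left.2 fun _ hu hv =>
    h ((strongClass_eq_of_mem hu).symm.trans (strongClass_eq_of_mem hv))

lemma mem_of_reach_of_mem_basisClasses {S : Set (Fin n)} (hS : S ∈ basisClasses a)
    {v w : Fin n} (hv : v ∈ S) (hwv : Reach a w v) : w ∈ S := by
  induction hwv using Relation.ReflTransGen.head_induction_on with
  | refl => exact hv
  | head hwx _ ih => exact by_contra fun hw => hS.2 _ _ hw ih hwx

/-- A vertex of `U` with the fewest ancestors lies in a basis bicomponent. -/
lemma exists_strongClass_mem_basisClasses {U : Finset (Fin n)} (hU : U.Nonempty)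
    (hclosed : ∀ u ∈ U, ∀ w, Reach a w u → w ∈ U) :
    ∃ u ∈ U, strongClass a u ∈ basisClasses a := by
  classical
  let ancestors (u : Fin n) : Finset (Fin n) := {w | Reach a w u}
  obtain ⟨u, huU, hmin⟩ := U.exists_min_image (fun u => #(ancestors u)) hU
  refine ⟨u, huU, ⟨u, rfl⟩, fun w x hw hx hwx => hw ?_⟩
  have hwu : Reach a w u := (Reach.of_pos hwx).trans hx.1
  have hsub : ancestors w ⊆ ancestors u := by
    intro z hz
    simp only [ancestors, mem_filter, mem_univ, true_and] at hz ⊢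
    exact hz.trans hwu
  have heq := eq_of_subset_of_card_le hsub (hmin w (hclosed u huU w hwu))
  have hu : u ∈ ancestors w := heq ▸ by simp [ancestors, Reach.refl]
  exact ⟨hwu, by simpa [ancestors] using hu⟩

lemma basisClasses_eq_singleton_of_root {r : Fin n} (hr : ∀ v, Reach a r v) :
    basisClasses a = {strongClass a r} := by
  ext S
  refine ⟨fun hS => ?_, fun hS => ?_⟩
  · obtain ⟨v, rfl⟩ := hS.1
    have hrv := mem_of_reach_of_mem_basisClasses hS (mem_strongClass_self v) (hr v)
    exact (strongClass_eq_of_mem hrv).symm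
  · rw [Set.mem_singleton_iff.1 hS]
    exact ⟨⟨r, rfl⟩, fun w x hw hx hwx => hw ⟨(Reach.of_pos hwx).trans hx.1, hr w⟩⟩

/-- The vertices not reachable from one basis bicomponent are closed under ancestors, so they
contain another one. -/
lemma exists_ne_mem_basisClasses (hn : 0 < n) (h : ¬ ∃ r, ∀ v, Reach a r v) :
    ∃ S ∈ basisClasses a, ∃ T ∈ basisClasses a, S ≠ T := by
  classical
  obtain ⟨u, -, hu⟩ := exists_strongClass_mem_basisClasses (U := univ)
    ⟨⟨0, hn⟩, mem_univ _⟩ fun _ _ _ _ => mem_univ _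
  obtain ⟨w, hw⟩ := not_forall.1 (not_exists.1 h u)
  obtain ⟨u', hu'U, hu'⟩ := exists_strongClass_mem_basisClasses (U := {v | ¬ Reach a u v})
    ⟨w, by simpa using hw⟩ fun v hv z hzv => by
      simp only [mem_filter, mem_univ, true_and] at hv ⊢
      exact fun huz => hv (huz.trans hzv)
  refine ⟨_, hu, _, hu', fun hEq => ?_⟩
  have hu'u : u' ∈ strongClass a u := hEq ▸ mem_strongClass_self u'
  exact (by simpa using hu'U : ¬ Reach a u u') hu'u.2

lemma ncard_basisClasses_eq_one_iff (hn : 0 < n) :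
    (basisClasses a).ncard = 1 ↔ ∃ r, ∀ v, Reach a r v := by
  refine ⟨fun h => by_contra fun hroot => ?_, fun ⟨r, hr⟩ => ?_⟩
  · obtain ⟨S, hS, T, hT, hST⟩ := exists_ne_mem_basisClasses hn hroot
    obtain ⟨B, hB⟩ := Set.ncard_eq_one.1 h
    rw [hB] at hS hT
    exact hST (hS.trans hT.symm)
  · rw [basisClasses_eq_singleton_of_root hr, Set.ncard_singleton]

end Reachability

lemma wellFounded_swap_of_finite {α : Type*} [Finite α] {r : α → α → Prop}
    (h : WellFounded r) : WellFounded (Function.swap r) := by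
  have : Std.Irrefl (Relation.TransGen (Function.swap r)) :=
    ⟨fun x hx => h.transGen.irrefl.irrefl x (Relation.transGen_swap.1 hx)⟩
  exact Subrelation.wf Relation.TransGen.single (Finite.wellFounded_of_trans_of_irrefl _)

section Forests

variable {a : Matrix (Fin n) (Fin n) ℝ}

namespace IsOutForest

variable {F : Finset (Fin n × Fin n)}

lemma wellFounded_parent (hF : IsOutForest a F) : WellFounded fun u v => (u, v) ∈ F :=
  wellFounded_swap_of_finite <|
    wellFounded_iff_isEmpty_descending_chain.2 ⟨fun ⟨f, hf⟩ => hF.2.2 ⟨f, hf⟩⟩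

/-- Heads of arcs are distinct, so `n - 1` arcs leave exactly one vertex without a parent. -/
lemma exists_root (hn : 0 < n) (hF : IsOutForest a F) (hcard : F.card = n - 1) :
    ∃ r, ∀ v ≠ r, ∃ u, (u, v) ∈ F := by
  classical
  have hinj : Set.InjOn Prod.snd (F : Set (Fin n × Fin n)) := fun e he e' he' h =>
    Prod.ext (hF.2.1 e.1 e'.1 e.2 he (h ▸ he')) h
  obtain ⟨r, hr⟩ : ∃ r, (F.image Prod.snd)ᶜ = {r} := by
    rw [← card_eq_one, card_compl, card_image_of_injOn hinj, hcard, Fintype.card_fin]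
    omega
  refine ⟨r, fun v hv => ?_⟩
  have hvF : v ∈ F.image Prod.snd := by_contra fun h => hv <| by simpa [hr] using mem_compl.2 h
  obtain ⟨e, he, rfl⟩ := mem_image.1 hvF
  exact ⟨e.1, he⟩

lemma exists_reach_of_card (hn : 0 < n) (hF : IsOutForest a F) (hcard : F.card = n - 1) :
    ∃ r, ∀ v, Reach a r v := by
  obtain ⟨r, hr⟩ := hF.exists_root hn hcard
  refine ⟨r, fun v => hF.wellFounded_parent.induction v fun v ih => ?_⟩
  by_cases hv : v = r
  · rw [hv]
    exact Reach.refl r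
  · obtain ⟨u, hu⟩ := hr v hv
    exact (ih u hu).trans (Reach.of_pos (hF.1 _ hu))

end IsOutForest

def ReachIn (a : Matrix (Fin n) (Fin n) ℝ) (r : Fin n) : ℕ → Fin n → Prop
  | 0, v => v = r
  | k + 1, v => ∃ u, ReachIn a r k u ∧ 0 < a v u

lemma Reach.exists_reachIn {r v : Fin n} (h : Reach a r v) : ∃ k, ReachIn a r k v := by
  induction h with
  | refl => exact ⟨0, rfl⟩
  | tail _ hvw ih =>
    obtain ⟨k, hk⟩ := ih
    exact ⟨k + 1, _, hk, hvw⟩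

/-- The parent of `v` in a breadth-first search tree from `r`, with `d` the distance from `r`. -/
lemma exists_parent_of_root {r : Fin n} (hr : ∀ v, Reach a r v) :
    ∃ (p : Fin n → Fin n) (d : Fin n → ℕ),
      ∀ v ≠ r, 0 < a v (p v) ∧ d (p v) < d v := by
  classical
  have hex (v : Fin n) : ∃ k, ReachIn a r k v := (hr v).exists_reachIn
  have hparent (v : Fin n) :
      ∃ u, v ≠ r → 0 < a v u ∧ Nat.find (hex u) < Nat.find (hex v) := by
    by_cases hv : v = r
    · exact ⟨v, fun h => absurd hv h⟩
    have hspec := Nat.find_spec (hex v)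
    obtain ⟨k, hk⟩ := Nat.exists_eq_succ_of_ne_zero (n := Nat.find (hex v)) fun h =>
      hv (by rwa [h] at hspec)
    rw [hk] at hspec
    obtain ⟨u, hu, hvu⟩ := hspec
    exact ⟨u, fun _ => ⟨hvu, (Nat.find_min' (hex u) hu).trans_lt (by omega)⟩⟩
  choose p hp using hparent
  exact ⟨p, fun v => Nat.find (hex v), hp⟩

lemma isOutForest_of_parent {r : Fin n} {p : Fin n → Fin n} {d : Fin n → ℕ}
    (hp : ∀ v ≠ r, 0 < a v (p v) ∧ d (p v) < d v) :
    IsOutForest a ((univ.erase r).image fun v => (p v, v)) := by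
  have hmem {u v : Fin n} : (u, v) ∈ (univ.erase r).image (fun v => (p v, v)) ↔
      v ≠ r ∧ p v = u := by
    simp [and_comm]
  refine ⟨fun ⟨u, v⟩ he => ?_, fun u u' v hu hu' => ?_, fun ⟨f, hf⟩ => ?_⟩
  · obtain ⟨hv, rfl⟩ := hmem.1 he
    exact (hp v hv).1
  · exact (hmem.1 hu).2.symm.trans (hmem.1 hu').2
  · have hmono : StrictMono (d ∘ f) := strictMono_nat_of_lt_succ fun k => by
      obtain ⟨hk, hpk⟩ := hmem.1 (hf k)
      simpa [← hpk] using (hp _ hk).2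
    exact not_injective_infinite_finite f hmono.injective.of_comp

lemma exists_spanning_outForest_iff (hn : 0 < n) :
    (∃ F, IsOutForest a F ∧ F.card = n - 1) ↔ ∃ r, ∀ v, Reach a r v := by
  refine ⟨fun ⟨F, hF, hcard⟩ => hF.exists_reach_of_card hn hcard, fun ⟨r, hr⟩ => ?_⟩
  obtain ⟨p, d, hp⟩ := exists_parent_of_root hr
  refine ⟨_, isOutForest_of_parent hp, ?_⟩
  rw [card_image_of_injective _ fun v w h => (Prod.ext_iff.1 h).2, card_erase_of_mem (mem_univ r),
    card_univ, Fintype.card_fin]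

end Forests

lemma Module.End.maxGenEigenspace_zero_eq_ker {K V : Type*} [Field K] [AddCommGroup V]
    [Module K V] {f : Module.End K V} (h : LinearMap.ker (f ^ 2) ≤ LinearMap.ker f) :
    Module.End.maxGenEigenspace f 0 = LinearMap.ker f := by
  have hstable := Module.End.ker_pow_constant (f := f) (k := 1) <| by
    rw [pow_one, Nat.succ_eq_add_one, one_add_one_eq_two]
    exact le_antisymm (by rw [sq, Module.End.mul_eq_comp]; exact LinearMap.ker_le_ker_comp f f) h
  refine le_antisymm (fun x hx => ?_) (Module.End.eigenspace_zero f ▸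
    Module.End.eigenspace_le_maxGenEigenspace)
  obtain ⟨k, hk⟩ := (Module.End.mem_maxGenEigenspace f 0 x).1 hx
  rw [zero_smul, sub_zero] at hk
  cases k with
  | zero => simp_all
  | succ m =>
    have hx : x ∈ LinearMap.ker (f ^ (1 + m)) := by rwa [add_comm]
    rwa [← hstable m, pow_one] at hx

namespace Matrix

variable {ι K : Type*} [Fintype ι] [DecidableEq ι] [Field K]

lemma rootMultiplicity_zero_charpoly (M : Matrix ι ι K) :
    M.charpoly.rootMultiplicity 0 =
      Module.finrank K (Module.End.maxGenEigenspace (toLin' M) 0) := by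
  rw [Polynomial.rootMultiplicity_eq_natTrailingDegree', ← charpoly_toLin',
    LinearMap.finrank_maxGenEigenspace_zero_eq]

lemma finrank_ker_toLin'_le_rootMultiplicity (M : Matrix ι ι K) :
    Module.finrank K (LinearMap.ker (toLin' M)) ≤ M.charpoly.rootMultiplicity 0 := by
  rw [rootMultiplicity_zero_charpoly, ← Module.End.eigenspace_zero]
  exact Submodule.finrank_mono Module.End.eigenspace_le_maxGenEigenspace

/-- The principal submatrix on `S` kills the constant vector; extend one of its left null vectors
by zero. -/
lemma exists_vecMul_eq_zero_support_subset {M : Matrix ι ι K} (hM : M *ᵥ 1 = 0) {S : Set ι}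
    (hS : S.Nonempty) (hblock : ∀ i ∈ S, ∀ k ∉ S, M i k = 0) :
    ∃ x : ι → K, x ≠ 0 ∧ Function.support x ⊆ S ∧ x ᵥ* M = 0 := by
  classical
  have : Nonempty S := hS.to_subtype
  set B := M.submatrix ((↑) : S → ι) ((↑) : S → ι)
  have hB : B *ᵥ 1 = 0 := by
    funext i
    have hi := congrFun hM i
    simp only [mulVec, dotProduct, Pi.one_apply, mul_one, Pi.zero_apply] at hi ⊢
    rwa [← Fintype.sum_subtype_add_sum_subtype (· ∈ S),
      Finset.sum_eq_zero fun (k : {k // k ∉ S}) _ => hblock i i.2 k k.2, add_zero] at hi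
  obtain ⟨w, hw0, hw⟩ :=
    exists_vecMul_eq_zero_iff.2 (exists_mulVec_eq_zero_iff.1 ⟨1, one_ne_zero, hB⟩)
  let x : ι → K := fun i => if h : i ∈ S then w ⟨i, h⟩ else 0
  have hxM (k : ι) : (x ᵥ* M) k = ∑ i : S, w i * M i k := by
    rw [vecMul, dotProduct, ← Fintype.sum_subtype_add_sum_subtype (· ∈ S)]
    simp [x, fun i : {i // i ∉ S} => i.2]
  refine ⟨x, fun hx => hw0 (funext fun i => by simpa [x] using congrFun hx i),
    fun i hi => by_contra fun h => by simp [x, h] at hi, funext fun k => ?_⟩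
  rw [hxM, Pi.zero_apply]
  by_cases hk : k ∈ S
  · exact congrFun hw ⟨k, hk⟩
  · exact Finset.sum_eq_zero fun i _ => by rw [hblock i i.2 k hk, mul_zero]

end Matrix

lemma linearIndependent_pair_of_disjoint_support {ι K : Type*} [Field K] {x y : ι → K}
    (hx : x ≠ 0) (hy : y ≠ 0) (hxy : Disjoint (Function.support x) (Function.support y)) :
    LinearIndependent K ![x, y] := by
  rw [LinearIndependent.pair_iff]
  intro s t hst
  obtain ⟨i, hi⟩ := Function.ne_iff.1 hx
  obtain ⟨j, hj⟩ := Function.ne_iff.1 hy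
  have hyi : y i = 0 := Function.notMem_support.1 (hxy.notMem_of_mem_left hi)
  have hxj : x j = 0 := Function.notMem_support.1 (hxy.notMem_of_mem_right hj)
  have hsi := congrFun hst i
  have htj := congrFun hst j
  simp only [Pi.add_apply, Pi.smul_apply, smul_eq_mul, Pi.zero_apply, hyi, hxj, mul_zero,
    add_zero, zero_add] at hsi htj
  exact ⟨(mul_eq_zero.1 hsi).resolve_right hi, (mul_eq_zero.1 htj).resolve_right hj⟩

section Kirchhoff

open Matrix

variable {a : Matrix (Fin n) (Fin n) ℝ}

lemma kirchhoff_mulVec_apply (x : Fin n → ℝ) (i : Fin n) :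
    (kirchhoff a *ᵥ x) i = ∑ k ∈ univ.erase i, a i k * (x i - x k) := by
  simp only [mulVec, dotProduct, kirchhoff, of_apply]
  rw [← add_sum_erase _ _ (mem_univ i), if_pos rfl, sum_mul, ← sum_add_distrib]
  refine sum_congr rfl fun k hk => ?_
  rw [if_neg (ne_of_mem_erase hk).symm]
  ring

lemma kirchhoff_mulVec_one : kirchhoff a *ᵥ 1 = 0 := by
  funext i
  simp [kirchhoff_mulVec_apply]

lemma kirchhoff_eq_zero_of_mem_basisClasses (hnn : ∀ i j, 0 ≤ a i j) {S : Set (Fin n)}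
    (hS : S ∈ basisClasses a) {i k : Fin n} (hi : i ∈ S) (hk : k ∉ S) :
    kirchhoff a i k = 0 := by
  have hik : i ≠ k := fun h => hk (h ▸ hi)
  simp [kirchhoff, hik, le_antisymm (not_lt.1 (hS.2 k i hk hi)) (hnn i k)]

lemma kirchhoff_mulVec_nonneg_of_isMax (hnn : ∀ i j, 0 ≤ a i j) {x : Fin n → ℝ} {i : Fin n}
    (hmax : ∀ k, x k ≤ x i) : 0 ≤ (kirchhoff a *ᵥ x) i := by
  rw [kirchhoff_mulVec_apply]
  exact sum_nonneg fun k _ => mul_nonneg (hnn i k) (sub_nonneg.2 (hmax k))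

lemma eq_of_isMax_of_kirchhoff_mulVec_eq_zero (hnn : ∀ i j, 0 ≤ a i j) {x : Fin n → ℝ}
    {i w : Fin n} (hx : (kirchhoff a *ᵥ x) i = 0) (hmax : ∀ k, x k ≤ x i) (hw : 0 < a i w) :
    x w = x i := by
  rw [kirchhoff_mulVec_apply] at hx
  by_cases hwi : w = i
  · rw [hwi]
  have hterm := (sum_eq_zero_iff_of_nonneg fun k _ =>
    mul_nonneg (hnn i k) (sub_nonneg.2 (hmax k))).1 hx w (by simpa using hwi)
  linarith [(mul_eq_zero.1 hterm).resolve_left hw.ne']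

lemma eq_of_reach_of_isMax (hnn : ∀ i j, 0 ≤ a i j) {x : Fin n → ℝ}
    (hx : kirchhoff a *ᵥ x = 0) {i r : Fin n} (hmax : ∀ k, x k ≤ x i) (hri : Reach a r i) :
    x r = x i := by
  induction hri using Relation.ReflTransGen.head_induction_on with
  | refl => rfl
  | head hrc _ ih =>
    exact (eq_of_isMax_of_kirchhoff_mulVec_eq_zero hnn (congrFun hx _)
      (fun k => ih ▸ hmax k) hrc).trans ih

/-- Maximum principle: the maximum and the minimum of `x` are both attained at the root. -/
lemma eq_of_kirchhoff_mulVec_eq_zero (hnn : ∀ i j, 0 ≤ a i j) {r : Fin n}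
    (hr : ∀ v, Reach a r v) {x : Fin n → ℝ} (hx : kirchhoff a *ᵥ x = 0) (v : Fin n) :
    x v = x r := by
  obtain ⟨i, -, hi⟩ := exists_max_image univ x ⟨r, mem_univ r⟩
  obtain ⟨j, -, hj⟩ := exists_min_image univ x ⟨r, mem_univ r⟩
  have hri := eq_of_reach_of_isMax hnn hx (fun k => hi k (mem_univ k)) (hr i)
  have hrj : -x r = -x j := eq_of_reach_of_isMax (x := -x) hnn
    (by rw [mulVec_neg, hx, neg_zero]) (fun k => neg_le_neg (hj k (mem_univ k))) (hr j)
  linarith [hi v (mem_univ v), hj v (mem_univ v)]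

/-- `L y` is constant, nonnegative at a maximum of `y` and nonpositive at a minimum. -/
lemma kirchhoff_mulVec_eq_zero_of_sq (hnn : ∀ i j, 0 ≤ a i j) {r : Fin n}
    (hr : ∀ v, Reach a r v) {y : Fin n → ℝ} (hy : kirchhoff a *ᵥ (kirchhoff a *ᵥ y) = 0) :
    kirchhoff a *ᵥ y = 0 := by
  obtain ⟨i, -, hi⟩ := exists_max_image univ y ⟨r, mem_univ r⟩
  obtain ⟨j, -, hj⟩ := exists_min_image univ y ⟨r, mem_univ r⟩
  have hyi := kirchhoff_mulVec_nonneg_of_isMax hnn fun k => hi k (mem_univ k)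
  have hyj := kirchhoff_mulVec_nonneg_of_isMax (x := -y) hnn fun k => neg_le_neg (hj k (mem_univ k))
  rw [mulVec_neg, Pi.neg_apply, neg_nonneg] at hyj
  have hconst := eq_of_kirchhoff_mulVec_eq_zero hnn hr hy
  funext v
  rw [Pi.zero_apply]
  linarith [hconst i, hconst j, hconst v]

lemma ker_toLin'_kirchhoff (hnn : ∀ i j, 0 ≤ a i j) {r : Fin n} (hr : ∀ v, Reach a r v) :
    LinearMap.ker (toLin' (kirchhoff a)) = ℝ ∙ 1 := by
  ext x
  simp only [LinearMap.mem_ker, toLin'_apply, Submodule.mem_span_singleton]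
  refine ⟨fun hx => ⟨x r, funext fun v => ?_⟩, ?_⟩
  · simp [eq_of_kirchhoff_mulVec_eq_zero hnn hr hx v]
  · rintro ⟨c, rfl⟩
    rw [mulVec_smul, kirchhoff_mulVec_one, smul_zero]

lemma rootMultiplicity_kirchhoff_of_root (hn : 0 < n) (hnn : ∀ i j, 0 ≤ a i j) {r : Fin n}
    (hr : ∀ v, Reach a r v) : (kirchhoff a).charpoly.rootMultiplicity 0 = 1 := by
  rw [rootMultiplicity_zero_charpoly, Module.End.maxGenEigenspace_zero_eq_ker,
    ker_toLin'_kirchhoff hnn hr, finrank_span_singleton]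
  · exact fun h => one_ne_zero (congrFun h ⟨0, hn⟩)
  · intro y hy
    rw [LinearMap.mem_ker, sq, Module.End.mul_apply, toLin'_apply, toLin'_apply] at hy
    rw [LinearMap.mem_ker, toLin'_apply]
    exact kirchhoff_mulVec_eq_zero_of_sq hnn hr hy

lemma two_le_rootMultiplicity_kirchhoff (hnn : ∀ i j, 0 ≤ a i j) {S T : Set (Fin n)}
    (hS : S ∈ basisClasses a) (hT : T ∈ basisClasses a) (hST : S ≠ T) :
    2 ≤ (kirchhoff a).charpoly.rootMultiplicity 0 := by
  obtain ⟨⟨u, rfl⟩, -⟩ := id hS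
  obtain ⟨⟨w, rfl⟩, -⟩ := id hT
  obtain ⟨x, hx0, hxS, hx⟩ := exists_vecMul_eq_zero_support_subset kirchhoff_mulVec_one
    ⟨u, mem_strongClass_self u⟩ fun _ hi _ hk =>
      kirchhoff_eq_zero_of_mem_basisClasses hnn hS hi hk
  obtain ⟨y, hy0, hyT, hy⟩ := exists_vecMul_eq_zero_support_subset kirchhoff_mulVec_one
    ⟨w, mem_strongClass_self w⟩ fun _ hi _ hk =>
      kirchhoff_eq_zero_of_mem_basisClasses hnn hT hi hk
  have hind := linearIndependent_pair_of_disjoint_support hx0 hy0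
    ((disjoint_strongClass_of_ne hST).mono hxS hyT)
  have hle :
      Submodule.span ℝ (Set.range ![x, y]) ≤ LinearMap.ker (toLin' (kirchhoff a)ᵀ) := by
    rw [Submodule.span_le]
    rintro _ ⟨k, rfl⟩
    fin_cases k <;> simp [mulVec_transpose, hx, hy]
  calc 2 = Module.finrank ℝ (Submodule.span ℝ (Set.range ![x, y])) := by
        simp [finrank_span_eq_card hind]
    _ ≤ Module.finrank ℝ (LinearMap.ker (toLin' (kirchhoff a)ᵀ)) := Submodule.finrank_mono hle
    _ ≤ (kirchhoff a)ᵀ.charpoly.rootMultiplicity 0 := finrank_ker_toLin'_le_rootMultiplicity _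
    _ = (kirchhoff a).charpoly.rootMultiplicity 0 := by rw [charpoly_transpose]

lemma rootMultiplicity_kirchhoff_eq_one_iff (hn : 0 < n) (hnn : ∀ i j, 0 ≤ a i j) :
    (kirchhoff a).charpoly.rootMultiplicity 0 = 1 ↔ ∃ r, ∀ v, Reach a r v := by
  refine ⟨fun h => by_contra fun hroot => ?_, fun ⟨r, hr⟩ =>
    rootMultiplicity_kirchhoff_of_root hn hnn hr⟩
  obtain ⟨S, hS, T, hT, hST⟩ := exists_ne_mem_basisClasses hn hroot
  have := two_le_rootMultiplicity_kirchhoff hnn hS hT hST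
  omega

end Kirchhoff

/-- Zero is a simple eigenvalue of the Kirchhoff matrix of a weighted digraph
iff the digraph has a spanning diverging tree, equivalently, iff it has exactly
one basis bicomponent. -/
theorem zero_simple_iff_spanning_tree {n : ℕ} (hn : 0 < n) (a : Matrix (Fin n) (Fin n) ℝ)
    (hnn : ∀ i j, 0 ≤ a i j) :
    (Polynomial.rootMultiplicity 0 (kirchhoff a).charpoly = 1 ↔
      ∃ F, IsOutForest a F ∧ F.card = n - 1) ∧
    ((∃ F, IsOutForest a F ∧ F.card = n - 1) ↔ (basisClasses a).ncard = 1) := by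
  rw [rootMultiplicity_kirchhoff_eq_one_iff hn hnn, exists_spanning_outForest_iff hn,
    ncard_basisClasses_eq_one_iff hn]
  exact ⟨Iff.rfl, Iff.rfl⟩
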